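/- arXiv:1907.12230 — 2 statements merged into one kernel-verified Lean document; each statement's English description precedes it below -/
import Mathlib

section
/- Define w : ℝ³ → ℝ³ by w(x,y,z) = (−e^x cos(y + e^z), e^x sin(y + e^z), 0), and let Ω be the open ball of radius 1 in ℝ³ centered at (0, −1, 0). Then w has no continuous Euclidean symmetry on Ω: for all a, b ∈ ℝ³, if the Lie derivative L_{ξ_E} w vanishes identically on Ω for ξ_E(x) = a + b × x, then a = 0 and b = 0. -/
noncomputable section

abbrev R3 : Type := Fin 3 → ℝ

/-- Partial derivative of a scalar field in the `i`-th coordinate direction. -/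
def pd (i : Fin 3) (f : R3 → ℝ) (x : R3) : ℝ := fderiv ℝ f x (Pi.single i 1)

/-- Curl of a vector field on ℝ³. -/
def vcurl (v : R3 → R3) (x : R3) : R3 :=
  ![pd 1 (fun y => v y 2) x - pd 2 (fun y => v y 1) x,
    pd 2 (fun y => v y 0) x - pd 0 (fun y => v y 2) x,
    pd 0 (fun y => v y 1) x - pd 1 (fun y => v y 0) x]

/-- Divergence of a vector field on ℝ³. -/
def vdiv (v : R3 → R3) (x : R3) : ℝ :=
  pd 0 (fun y => v y 0) x + pd 1 (fun y => v y 1) x + pd 2 (fun y => v y 2) x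

/-- Componentwise directional derivative `(ξ·∇)v`. -/
def dirDeriv (ξ v : R3 → R3) (x : R3) : R3 :=
  fun j => ∑ i : Fin 3, ξ x i * pd i (fun y => v y j) x

/-- Lie derivative of a vector field: `L_ξ v = (ξ·∇)v − (v·∇)ξ`. -/
def lieD (ξ v : R3 → R3) : R3 → R3 :=
  fun x => dirDeriv ξ v x - dirDeriv v ξ x

/-- Gradient of a scalar field on ℝ³. -/
def grad3 (f : R3 → ℝ) (x : R3) : R3 := fun i => pd i f x

lemma pd_of {f : R3 → ℝ} {L : R3 →L[ℝ] ℝ} {p : R3} (h : HasFDerivAt f L p) (i : Fin 3) :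
    pd i f p = L (Pi.single i 1) := by rw [pd, h.fderiv]

def pr (i : Fin 3) : R3 →L[ℝ] ℝ := ContinuousLinearMap.proj (R := ℝ) (φ := fun _ : Fin 3 => ℝ) i

lemma coordD (i : Fin 3) (p : R3) : HasFDerivAt (fun q : R3 => q i) (pr i) p :=
  (pr i).hasFDerivAt

lemma pd_w0 (i : Fin 3) (p : R3) :
    pd i (fun q : R3 => -(Real.exp (q 0)) * Real.cos (q 1 + Real.exp (q 2))) p
    = ![-(Real.exp (p 0)) * Real.cos (p 1 + Real.exp (p 2)),
        Real.exp (p 0) * Real.sin (p 1 + Real.exp (p 2)),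
        Real.exp (p 2) * (Real.exp (p 0) * Real.sin (p 1 + Real.exp (p 2)))] i := by
  have h := ((coordD 0 p).exp.neg.mul ((coordD 1 p).add ((coordD 2 p).exp)).cos)
  rw [pd_of (f := fun q : R3 => -(Real.exp (q 0)) * Real.cos (q 1 + Real.exp (q 2))) h i]
  fin_cases i <;> simp [pr, Pi.single_apply] <;> ring

lemma pd_w1 (i : Fin 3) (p : R3) :
    pd i (fun q : R3 => Real.exp (q 0) * Real.sin (q 1 + Real.exp (q 2))) p
    = ![Real.exp (p 0) * Real.sin (p 1 + Real.exp (p 2)),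
        Real.exp (p 0) * Real.cos (p 1 + Real.exp (p 2)),
        Real.exp (p 2) * (Real.exp (p 0) * Real.cos (p 1 + Real.exp (p 2)))] i := by
  have h := ((coordD 0 p).exp.mul ((coordD 1 p).add ((coordD 2 p).exp)).sin)
  rw [pd_of (f := fun q : R3 => Real.exp (q 0) * Real.sin (q 1 + Real.exp (q 2))) h i]
  fin_cases i <;> simp [pr, Pi.single_apply] <;> ring

lemma pd_const (i : Fin 3) (c : ℝ) (p : R3) : pd i (fun _ : R3 => c) p = 0 := by
  rw [pd_of (hasFDerivAt_const c p) i]; simp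

lemma pd_xi0 (i : Fin 3) (a b : R3) (p : R3) :
    pd i (fun y : R3 => a 0 + (b 1 * y 2 - b 2 * y 1)) p = ![0, -b 2, b 1] i := by
  have h := (hasFDerivAt_const (a 0) p).add
    (((coordD 2 p).const_mul (b 1)).sub ((coordD 1 p).const_mul (b 2)))
  rw [pd_of (f := fun y : R3 => a 0 + (b 1 * y 2 - b 2 * y 1)) h i]
  fin_cases i <;> simp [pr, Pi.single_apply]

lemma pd_xi1 (i : Fin 3) (a b : R3) (p : R3) :
    pd i (fun y : R3 => a 1 + (b 2 * y 0 - b 0 * y 2)) p = ![b 2, 0, -b 0] i := by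
  have h := (hasFDerivAt_const (a 1) p).add
    (((coordD 0 p).const_mul (b 2)).sub ((coordD 2 p).const_mul (b 0)))
  rw [pd_of (f := fun y : R3 => a 1 + (b 2 * y 0 - b 0 * y 2)) h i]
  fin_cases i <;> simp [pr, Pi.single_apply]

lemma pd_xi2 (i : Fin 3) (a b : R3) (p : R3) :
    pd i (fun y : R3 => a 2 + (b 0 * y 1 - b 1 * y 0)) p = ![-b 1, b 0, 0] i := by
  have h := (hasFDerivAt_const (a 2) p).add
    (((coordD 1 p).const_mul (b 0)).sub ((coordD 0 p).const_mul (b 1)))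
  rw [pd_of (f := fun y : R3 => a 2 + (b 0 * y 1 - b 1 * y 0)) h i]
  fin_cases i <;> simp [pr, Pi.single_apply]

lemma lieD_eval (a b : R3) (p : R3) :
    lieD (fun y => a + crossProduct b y)
      (fun q : R3 => ![-(Real.exp (q 0)) * Real.cos (q 1 + Real.exp (q 2)),
        Real.exp (q 0) * Real.sin (q 1 + Real.exp (q 2)), 0]) p =
    ![ (a 0 + (b 1 * p 2 - b 2 * p 1)) * (-(Real.exp (p 0)) * Real.cos (p 1 + Real.exp (p 2)))
        + ((a 1 + (b 2 * p 0 - b 0 * p 2)) + (a 2 + (b 0 * p 1 - b 1 * p 0)) * Real.exp (p 2) + b 2)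
          * (Real.exp (p 0) * Real.sin (p 1 + Real.exp (p 2))),
      (a 0 + (b 1 * p 2 - b 2 * p 1)) * (Real.exp (p 0) * Real.sin (p 1 + Real.exp (p 2)))
        - ((a 1 + (b 2 * p 0 - b 0 * p 2)) + (a 2 + (b 0 * p 1 - b 1 * p 0)) * Real.exp (p 2) + b 2)
          * (-(Real.exp (p 0)) * Real.cos (p 1 + Real.exp (p 2))),
      b 1 * (-(Real.exp (p 0)) * Real.cos (p 1 + Real.exp (p 2)))
        - b 0 * (Real.exp (p 0) * Real.sin (p 1 + Real.exp (p 2))) ] := by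
  have hx0 : (fun y : R3 => (a + crossProduct b y) 0)
      = fun y : R3 => a 0 + (b 1 * y 2 - b 2 * y 1) := by
    funext y; simp [cross_apply]
  have hx1 : (fun y : R3 => (a + crossProduct b y) 1)
      = fun y : R3 => a 1 + (b 2 * y 0 - b 0 * y 2) := by
    funext y; simp [cross_apply]
  have hx2 : (fun y : R3 => (a + crossProduct b y) 2)
      = fun y : R3 => a 2 + (b 0 * y 1 - b 1 * y 0) := by
    funext y; simp [cross_apply]
  funext j
  simp only [lieD, dirDeriv, Pi.sub_apply]
  fin_cases j <;>
  · simp only [Fin.zero_eta, Fin.mk_one, Fin.reduceFinMk, Matrix.cons_val_zero,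
      Matrix.cons_val_one, Matrix.head_cons, Matrix.cons_val_two, Matrix.tail_cons,
      Fin.sum_univ_three, hx0, hx1, hx2, pd_w0, pd_w1, pd_const, pd_xi0, pd_xi1, pd_xi2,
      Pi.zero_apply, Pi.add_apply, cross_apply]
    ring

/-- the Beltrami field `w = (−eˣ cos(y+eᶻ), eˣ sin(y+eᶻ), 0)` has no
continuous Euclidean symmetry on the open unit ball centered at `(0,−1,0)`. -/
theorem explicit_beltrami_exp_z_no_euclidean_symmetry :
    let w : R3 → R3 := fun p =>
      ![-(Real.exp (p 0)) * Real.cos (p 1 + Real.exp (p 2)),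
        Real.exp (p 0) * Real.sin (p 1 + Real.exp (p 2)), 0]
    let Ω : Set R3 := {p | (p 0) ^ 2 + (p 1 + 1) ^ 2 + (p 2) ^ 2 < 1}
    ∀ a b : R3,
      (∀ x ∈ Ω, lieD (fun y => a + crossProduct b y) w x = 0) →
      a = 0 ∧ b = 0 := by
  intro w Ω a b h
  have main : ∀ p : R3, p ∈ Ω →
      (a 0 + (b 1 * p 2 - b 2 * p 1)) = 0 ∧
      ((a 1 + (b 2 * p 0 - b 0 * p 2)) + (a 2 + (b 0 * p 1 - b 1 * p 0)) * Real.exp (p 2) + b 2)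
        = 0 ∧
      b 1 * Real.cos (p 1 + Real.exp (p 2)) + b 0 * Real.sin (p 1 + Real.exp (p 2)) = 0 := by
    intro p hp
    set E := Real.exp (p 0) with hEdef
    set S := Real.sin (p 1 + Real.exp (p 2)) with hSdef
    set C := Real.cos (p 1 + Real.exp (p 2)) with hCdef
    set A := a 0 + (b 1 * p 2 - b 2 * p 1) with hAdef
    set M := (a 1 + (b 2 * p 0 - b 0 * p 2)) + (a 2 + (b 0 * p 1 - b 1 * p 0)) * Real.exp (p 2)
      + b 2 with hMdef
    have h1 : (![A * (-E * C) + M * (E * S),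
        A * (E * S) - M * (-E * C),
        b 1 * (-E * C) - b 0 * (E * S)] : R3) = 0 := by
      rw [← lieD_eval a b p]
      exact h p hp
    have e0 := congrFun h1 0
    have e1 := congrFun h1 1
    have e2 := congrFun h1 2
    simp only [Matrix.cons_val_zero, Matrix.cons_val_one, Matrix.head_cons,
      Matrix.cons_val_two, Matrix.tail_cons, Pi.zero_apply] at e0 e1 e2
    have hP : S ^ 2 + C ^ 2 = 1 := Real.sin_sq_add_cos_sq _
    have hE : (0:ℝ) < E := Real.exp_pos _
    have hA : A * E = 0 := by linear_combination S * e1 - C * e0 - (A * E) * hP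
    have hM : M * E = 0 := by linear_combination C * e1 + S * e0 - (M * E) * hP
    have hB : (b 1 * C + b 0 * S) * E = 0 := by linear_combination - e2
    exact ⟨by rcases mul_eq_zero.1 hA with h' | h'; exact h'; exact absurd h' (ne_of_gt hE),
      by rcases mul_eq_zero.1 hM with h' | h'; exact h'; exact absurd h' (ne_of_gt hE),
      by rcases mul_eq_zero.1 hB with h' | h'; exact h'; exact absurd h' (ne_of_gt hE)⟩
  have mem1 : (![0,-1,0] : R3) ∈ Ω := by
    simp only [Ω, Set.mem_setOf_eq]
    norm_num [Matrix.cons_val_two, Matrix.tail_cons, Matrix.head_cons]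
  have mem2 : (![0,-(1/2),0] : R3) ∈ Ω := by
    simp only [Ω, Set.mem_setOf_eq]
    norm_num [Matrix.cons_val_two, Matrix.tail_cons, Matrix.head_cons]
  have mem3 : (![0,-1,1/2] : R3) ∈ Ω := by
    simp only [Ω, Set.mem_setOf_eq]
    norm_num [Matrix.cons_val_two, Matrix.tail_cons, Matrix.head_cons]
  obtain ⟨f1a, f1b, f1c⟩ := main _ mem1
  obtain ⟨f2a, f2b, f2c⟩ := main _ mem2
  obtain ⟨f3a, f3b, f3c⟩ := main _ mem3
  norm_num [Matrix.cons_val_zero, Matrix.cons_val_one, Matrix.head_cons,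
    Matrix.cons_val_two, Matrix.tail_cons, Real.exp_zero, Real.cos_zero, Real.sin_zero]
    at f1a f1b f1c f2a f2b f2c f3a f3b
  -- f1c : b 1 = 0 (b1 * cos 0 + b0 * sin 0 = 0)
  have hb1 : b 1 = 0 := by linarith [f1c]
  have hs : (0:ℝ) < Real.sin (1/2) :=
    Real.sin_pos_of_pos_of_lt_pi (by norm_num) (by linarith [Real.pi_gt_three])
  have hb0 : b 0 = 0 := by
    rcases mul_eq_zero.1 (show b 0 * Real.sin (1/2) = 0 by
      rw [hb1] at f2c; linarith [f2c]) with h' | h'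
    · exact h'
    · exact absurd h' (ne_of_gt hs)
  have hb2 : b 2 = 0 := by linarith [f1a, f2a]
  have ha0 : a 0 = 0 := by linarith [f1a]
  have hgt : (1:ℝ) < Real.exp (1/2) := by
    have := Real.add_one_lt_exp (show (1/2 : ℝ) ≠ 0 by norm_num)
    linarith
  have ha2 : a 2 = 0 := by
    have key : a 2 * (Real.exp (1/2) - 1) = 0 := by
      rw [hb0, hb2] at f1b f3b
      nlinarith [f1b, f3b]
    rcases mul_eq_zero.1 key with h' | h'
    · exact h'
    · exact absurd h' (by intro hc; linarith)
  have ha1 : a 1 = 0 := by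
    rw [hb0, hb2] at f1b
    linarith [f1b]
  refine ⟨funext fun i => ?_, funext fun i => ?_⟩ <;> fin_cases i <;>
    simp only [Pi.zero_apply] <;> assumption
end
end

section
/- Define w : ℝ³ → ℝ³ by w(x,y,z) = (x + yz, −2y, z), which equals ∇((x²+z²)/2 − y²) + yz∇x, and define χ(x,y,z) = yz(x + yz/2). Then on all of ℝ³: div w = 0 and w × (curl w) = ∇χ; thus w is a smooth magnetofluidostatic field with pressure field χ, and ∇χ ≠ 0 at every point with yz ≠ 0. -/
noncomputable section

lemma diff_proj (j : Fin 3) (x : R3) : DifferentiableAt ℝ (fun p : R3 => p j) x :=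
  (ContinuousLinearMap.proj j : R3 →L[ℝ] ℝ).differentiableAt

lemma pd_proj (i j : Fin 3) (x : R3) : pd i (fun p => p j) x = (Pi.single i 1 : R3) j := by
  have : fderiv ℝ (fun p : R3 => p j) x = (ContinuousLinearMap.proj j : R3 →L[ℝ] ℝ) :=
    (ContinuousLinearMap.proj j : R3 →L[ℝ] ℝ).fderiv
  simp [pd, this]

lemma pd_mul (i : Fin 3) (f g : R3 → ℝ) (x : R3) (hf : DifferentiableAt ℝ f x)
    (hg : DifferentiableAt ℝ g x) :
    pd i (fun p => f p * g p) x = f x * pd i g x + pd i f x * g x := by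
  simp [pd, fderiv_fun_mul hf hg, mul_comm]

lemma pd_add (i : Fin 3) (f g : R3 → ℝ) (x : R3) (hf : DifferentiableAt ℝ f x)
    (hg : DifferentiableAt ℝ g x) :
    pd i (fun p => f p + g p) x = pd i f x + pd i g x := by
  simp [pd, fderiv_fun_add hf hg]

lemma pd_div_const (i : Fin 3) (f : R3 → ℝ) (c : ℝ) (x : R3) (hf : DifferentiableAt ℝ f x) :
    pd i (fun p => f p / c) x = pd i f x / c := by
  simp only [div_eq_mul_inv, pd, fderiv_mul_const hf]
  simp [mul_comm]

lemma pd_const_mul (i : Fin 3) (f : R3 → ℝ) (c : ℝ) (x : R3) (hf : DifferentiableAt ℝ f x) :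
    pd i (fun p => c * f p) x = c * pd i f x := by
  simp [pd, fderiv_const_mul hf]

lemma diff_half (p : R3) : DifferentiableAt ℝ (fun y : R3 => y 1 * y 2 / 2) p := by
  simp only [div_eq_mul_inv]
  exact ((diff_proj 1 p).mul (diff_proj 2 p)).mul (differentiableAt_const _)

lemma diff_w0 (p : R3) : DifferentiableAt ℝ (fun y : R3 => y 0 + y 1 * y 2) p :=
  (diff_proj 0 p).add ((diff_proj 1 p).mul (diff_proj 2 p))

lemma pdw0 (i : Fin 3) (p : R3) :
    pd i (fun y : R3 => y 0 + y 1 * y 2) p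
      = (Pi.single i 1 : R3) 0 + (p 1 * (Pi.single i 1 : R3) 2 + (Pi.single i 1 : R3) 1 * p 2) := by
  rw [pd_add _ _ (fun y : R3 => y 1 * y 2) _ (diff_proj 0 p) ((diff_proj 1 p).mul (diff_proj 2 p)),
      pd_mul _ _ _ _ (diff_proj 1 p) (diff_proj 2 p), pd_proj, pd_proj, pd_proj]

lemma pdw1 (i : Fin 3) (p : R3) :
    pd i (fun y : R3 => -2 * y 1) p = -2 * (Pi.single i 1 : R3) 1 := by
  rw [pd_const_mul _ _ _ _ (diff_proj 1 p), pd_proj]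

lemma pdchi (i : Fin 3) (p : R3) :
    pd i (fun y : R3 => y 1 * y 2 * (y 0 + y 1 * y 2 / 2)) p
      = p 1 * p 2 * ((Pi.single i 1 : R3) 0
            + (p 1 * (Pi.single i 1 : R3) 2 + (Pi.single i 1 : R3) 1 * p 2) / 2)
        + (p 1 * (Pi.single i 1 : R3) 2 + (Pi.single i 1 : R3) 1 * p 2) * (p 0 + p 1 * p 2 / 2) := by
  have hf : DifferentiableAt ℝ (fun y : R3 => y 1 * y 2) p := (diff_proj 1 p).mul (diff_proj 2 p)
  have hg : DifferentiableAt ℝ (fun y : R3 => y 0 + y 1 * y 2 / 2) p :=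
    (diff_proj 0 p).add (diff_half p)
  rw [pd_mul _ _ _ _ hf hg,
      pd_add _ _ _ _ (diff_proj 0 p) (diff_half p),
      pd_div_const _ (fun y : R3 => y 1 * y 2) _ _ ((diff_proj 1 p).mul (diff_proj 2 p)),
      pd_mul _ _ _ _ (diff_proj 1 p) (diff_proj 2 p), pd_proj, pd_proj, pd_proj]

/-- the field `w = (x + yz, −2y, z)` is a smooth magnetofluidostatic
field on all of ℝ³ with pressure field `χ = yz(x + yz/2)`, whose pressure
gradient is nonzero wherever `yz ≠ 0`. -/
theorem explicit_mfs_yz :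
    let w : R3 → R3 := fun p => ![p 0 + p 1 * p 2, -2 * p 1, p 2]
    let χ : R3 → ℝ := fun p => p 1 * p 2 * (p 0 + p 1 * p 2 / 2)
    ∀ p : R3,
      vdiv w p = 0
      ∧ crossProduct (w p) (vcurl w p) = grad3 χ p
      ∧ (p 1 * p 2 ≠ 0 → grad3 χ p ≠ 0) := by
  intro w χ p
  have hw0 : (fun y : R3 => w y 0) = fun y : R3 => y 0 + y 1 * y 2 := by
    funext y; simp [w]
  have hw1 : (fun y : R3 => w y 1) = fun y : R3 => -2 * y 1 := by
    funext y; simp [w]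
  have hw2 : (fun y : R3 => w y 2) = fun y : R3 => y 2 := by
    funext y; simp [w]
  have hgrad : grad3 χ p
      = ![p 1 * p 2, p 0 * p 2 + p 1 * p 2 ^ 2, p 0 * p 1 + p 1 ^ 2 * p 2] := by
    funext i
    fin_cases i <;>
      · show pd _ χ p = _
        rw [show χ = fun y : R3 => y 1 * y 2 * (y 0 + y 1 * y 2 / 2) from rfl, pdchi]
        simp [Pi.single_apply]
        try ring
  have hcurl : vcurl w p = ![0, p 1, -(p 2)] := by
    funext i
    fin_cases i <;>
      · show _ - _ = _
        simp only [hw0, hw1, hw2, pdw0, pdw1, pd_proj]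
        simp [Pi.single_apply]
  refine ⟨?_, ?_, ?_⟩
  · show pd 0 _ p + pd 1 _ p + pd 2 _ p = 0
    simp only [hw0, hw1, hw2, pdw0, pdw1, pd_proj]
    simp [Pi.single_apply]
    norm_num
  · rw [hcurl, hgrad]
    funext i
    fin_cases i <;>
      · simp [crossProduct, w]
        ring
  · intro h hne
    rw [hgrad] at hne
    have := congrFun hne 0
    simp at this
    rcases this with h1 | h1 <;> simp [h1] at h
end
end
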